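/- Let Ω be a nonempty set and (f_n) a measure free martingale with finite ranges, generating partitions ℚ_n and algebras 𝒜_n. Then there exists a finitely additive probability measure P on the algebra 𝒜_∞ = ⋃_n 𝒜_n such that for every n and every atom Q ∈ ℚ_n with P(Q) > 0, Σ_{Q' ∈ ℚ_{n+1}, Q' ⊆ Q} f_{n+1}(Q') P(Q') = f_n(Q) P(Q), i.e., (f_n, 𝒜_n) is a martingale under P. -/

import Mathlib

/-- The atom of the partition generated by `f 0, ..., f n` containing `ω`. -/
def atomOf {Ω : Type*} (f : ℕ → Ω → ℝ) (n : ℕ) (ω : Ω) : Set Ω :=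
  {ω' | ∀ j ≤ n, f j ω' = f j ω}

/-- The algebra `𝒜ₙ` generated by `f 0, ..., f n`: the sets that are unions of
atoms of the partition generated by `f 0, ..., f n`. -/
def algLevel {Ω : Type*} (f : ℕ → Ω → ℝ) (n : ℕ) : Set (Set Ω) :=
  {A | ∀ ω ∈ A, atomOf f n ω ⊆ A}

/-- The algebra `𝒜_∞ = ⋃ₙ 𝒜ₙ`. -/
def algInf {Ω : Type*} (f : ℕ → Ω → ℝ) : Set (Set Ω) :=
  ⋃ n, algLevel f n

/-- `P` is a finitely additive probability measure on the algebra `𝒜`. -/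
def IsFAProb {Ω : Type*} (𝒜 : Set (Set Ω)) (P : Set Ω → ℝ) : Prop :=
  (∀ A ∈ 𝒜, 0 ≤ P A) ∧ P ∅ = 0 ∧ P Set.univ = 1 ∧
    ∀ A ∈ 𝒜, ∀ B ∈ 𝒜, Disjoint A B → P (A ∪ B) = P A + P B

/-- `(f, 𝒜ₙ)` is a measure free martingale: on each atom `Q` of `ℚₙ`, the
(constant) value of `f n` lies between the minimum and the maximum of
`f (n+1)` on `Q` (attained since `f (n+1)` has finite range). -/
def IsMeasureFreeMartingale {Ω : Type*} (f : ℕ → Ω → ℝ) : Prop :=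
  ∀ n (ω : Ω), (∃ ω₁ ∈ atomOf f n ω, f (n + 1) ω₁ ≤ f n ω) ∧
    (∃ ω₂ ∈ atomOf f n ω, f n ω ≤ f (n + 1) ω₂)

/-!
Every atom `Q` of `ℚₙ` contains points `ω₁, ω₂` with `f (n+1) ω₁ ≤ f n Q ≤ f (n+1) ω₂`, so
splitting the mass sitting at a point of `Q` between `ω₁` and `ω₂` in the right convex proportion
is a transition that stays inside `Q` and preserves the mean of `f`. Iterating these transitions
from a Dirac mass gives finitely supported probabilities `μₙ` that agree on `𝒜ₙ` from time `n` on,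
hence a finitely additive probability `P` on `𝒜_∞`; mean preservation is the martingale identity.
-/

open Finsupp

section FinitelySupported

variable {α : Type*}

lemma linearCombination_nonneg {μ : α →₀ ℝ} {g : α → ℝ} (hμ : ∀ x, 0 ≤ μ x)
    (hg : ∀ x, 0 ≤ g x) : 0 ≤ linearCombination ℝ g μ :=
  Finset.sum_nonneg fun x _ => mul_nonneg (hμ x) (hg x)

lemma linearCombination_congr_of_support_subset {μ : α →₀ ℝ} {S : Set α}
    (hμ : ↑μ.support ⊆ S) {g h : α → ℝ} (hgh : S.EqOn g h) :
    linearCombination ℝ g μ = linearCombination ℝ h μ := by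
  simp only [linearCombination_apply]
  exact Finsupp.sum_congr fun x hx => by rw [hgh (hμ hx)]

lemma linearCombination_finset_sum {ι : Type*} (s : Finset ι) (g : ι → α → ℝ) (μ : α →₀ ℝ) :
    linearCombination ℝ (∑ i ∈ s, g i) μ = ∑ i ∈ s, linearCombination ℝ (g i) μ := by
  simp only [linearCombination_apply, Finsupp.sum, Finset.sum_apply, Finset.smul_sum]
  exact Finset.sum_comm

lemma linearCombination_const_mul (c : ℝ) (g : α → ℝ) (μ : α →₀ ℝ) :
    linearCombination ℝ (fun x => c * g x) μ = c * linearCombination ℝ g μ := by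
  simp only [linearCombination_apply, Finsupp.sum, smul_eq_mul, Finset.mul_sum, mul_left_comm]

noncomputable def setMass (μ : α →₀ ℝ) (A : Set α) : ℝ :=
  linearCombination ℝ (A.indicator 1) μ

lemma setMass_union {μ : α →₀ ℝ} {A B : Set α} (h : Disjoint A B) :
    setMass μ (A ∪ B) = setMass μ A + setMass μ B := by
  simp only [setMass, linearCombination_apply, Finsupp.sum, ← Finset.sum_add_distrib,
    Set.indicator_union_of_disjoint h, smul_add]

lemma sum_mul_setMass_inter_preimage {g : α → ℝ} {s : Finset ℝ}
    (hs : ∀ x, g x ∈ s) (Q : Set α) (μ : α →₀ ℝ) :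
    ∑ v ∈ s, v * setMass μ (Q ∩ g ⁻¹' {v}) = linearCombination ℝ (Q.indicator g) μ := by
  classical
  simp only [setMass, ← linearCombination_const_mul, ← linearCombination_finset_sum]
  congr 2
  funext x
  simp only [Finset.sum_apply, Set.indicator_apply, Set.mem_inter_iff, Set.mem_preimage,
    Set.mem_singleton_iff, Pi.one_apply, mul_ite, mul_one, mul_zero]
  by_cases hx : x ∈ Q <;> simp [hx, Finset.sum_ite_eq, hs x]

structure IsProbOn (ν : α →₀ ℝ) (S : Set α) : Prop where
  nonneg : ∀ x, 0 ≤ ν x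
  support_subset : ↑ν.support ⊆ S
  total : linearCombination ℝ (1 : α → ℝ) ν = 1

lemma IsProbOn.linearCombination_eq_of_eqOn {ν : α →₀ ℝ} {S : Set α} (hν : IsProbOn ν S)
    {g : α → ℝ} {c : ℝ} (hg : S.EqOn g fun _ => c) : linearCombination ℝ g ν = c := by
  have hg' : S.EqOn g fun x => c * (1 : α → ℝ) x := fun x hx => by simp [hg hx]
  rw [linearCombination_congr_of_support_subset hν.support_subset hg',
    linearCombination_const_mul, hν.total, mul_one]

lemma exists_isProbOn_linearCombination_eq {S : Set α} {g : α → ℝ} {c : ℝ} {x₁ x₂ : α}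
    (h₁ : x₁ ∈ S) (h₂ : x₂ ∈ S) (hc₁ : g x₁ ≤ c) (hc₂ : c ≤ g x₂) :
    ∃ ν : α →₀ ℝ, IsProbOn ν S ∧ linearCombination ℝ g ν = c := by
  classical
  obtain ⟨s, t, hs, ht, hst, hc⟩ := Icc_subset_segment (𝕜 := ℝ) ⟨hc₁, hc₂⟩
  refine ⟨single x₁ s + single x₂ t, ⟨fun x => ?_, ?_, ?_⟩, ?_⟩
  · simp only [Finsupp.add_apply, single_apply]
    split_ifs <;> positivity
  · intro x hx
    by_contra hxS
    have hx₁ : x₁ ≠ x := fun h => hxS (h ▸ h₁)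
    have hx₂ : x₂ ≠ x := fun h => hxS (h ▸ h₂)
    simp [hx₁, hx₂] at hx
  · simpa using hst
  · simpa using hc

end FinitelySupported

section Chain

variable {α : Type*} {x₀ : α} {κ : ℕ → α → α →₀ ℝ}

variable (x₀ κ) in
noncomputable def chainLaw : ℕ → α →₀ ℝ
  | 0 => single x₀ 1
  | n + 1 => linearCombination ℝ (κ n) (chainLaw n)

lemma chainLaw_succ_linearCombination (n : ℕ) (g : α → ℝ) :
    linearCombination ℝ g (chainLaw x₀ κ (n + 1)) =
      linearCombination ℝ (fun x => linearCombination ℝ g (κ n x)) (chainLaw x₀ κ n) :=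
  linearCombination_linearCombination ..

lemma isProbOn_chainLaw {S : ℕ → α → Set α} (hκ : ∀ n x, IsProbOn (κ n x) (S n x)) (n : ℕ) :
    IsProbOn (chainLaw x₀ κ n) Set.univ := by
  induction n with
  | zero => exact ⟨Finsupp.single_nonneg.mpr zero_le_one, Set.subset_univ _, by simp [chainLaw]⟩
  | succ n ih =>
    refine ⟨fun y => ?_, Set.subset_univ _, ?_⟩
    · rw [chainLaw, ← lapply_apply (R := ℝ) y, apply_linearCombination]
      exact linearCombination_nonneg ih.nonneg fun x => (hκ n x).nonneg y
    · rw [chainLaw_succ_linearCombination]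
      exact ih.linearCombination_eq_of_eqOn fun x _ => by simp [(hκ n x).total]

end Chain

section Atoms

variable {Ω : Type*} {f : ℕ → Ω → ℝ} {m n : ℕ} {x y : Ω} {A B : Set Ω}

lemma mem_atomOf_comm (h : y ∈ atomOf f n x) : x ∈ atomOf f n y :=
  fun j hj => (h j hj).symm

lemma atomOf_subset_of_mem (h : y ∈ atomOf f n x) : atomOf f n y ⊆ atomOf f n x :=
  fun _ hz j hj => (hz j hj).trans (h j hj)

lemma atomOf_subset_atomOf (h : n ≤ m) (x : Ω) : atomOf f m x ⊆ atomOf f n x :=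
  fun _ hy j hj => hy j (hj.trans h)

lemma atomOf_mem_algLevel (f : ℕ → Ω → ℝ) (n : ℕ) (x : Ω) : atomOf f n x ∈ algLevel f n :=
  fun _ => atomOf_subset_of_mem

lemma algLevel_mono (h : n ≤ m) : algLevel f n ⊆ algLevel f m :=
  fun _ hA x hx => (atomOf_subset_atomOf h x).trans (hA x hx)

lemma union_mem_algLevel (hA : A ∈ algLevel f n) (hB : B ∈ algLevel f n) :
    A ∪ B ∈ algLevel f n := by
  rintro x (hx | hx)
  · exact (hA x hx).trans Set.subset_union_left
  · exact (hB x hx).trans Set.subset_union_right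

lemma atomOf_inter_preimage_mem_algLevel_succ (x : Ω) (v : ℝ) :
    atomOf f n x ∩ f (n + 1) ⁻¹' {v} ∈ algLevel f (n + 1) := by
  rintro y ⟨hyQ, hyv⟩ z hz
  refine ⟨atomOf_subset_of_mem hyQ (atomOf_subset_atomOf n.le_succ y hz), ?_⟩
  rwa [Set.mem_preimage, hz (n + 1) le_rfl]

lemma mem_iff_of_mem_atomOf (hA : A ∈ algLevel f n) (h : y ∈ atomOf f n x) : y ∈ A ↔ x ∈ A :=
  ⟨fun hy => hA y hy (mem_atomOf_comm h), fun hx => hA x hx h⟩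

end Atoms

lemma IsMeasureFreeMartingale.exists_isProbOn {Ω : Type*} {f : ℕ → Ω → ℝ}
    (hf : IsMeasureFreeMartingale f) (n : ℕ) (x : Ω) :
    ∃ ν : Ω →₀ ℝ, IsProbOn ν (atomOf f n x) ∧ linearCombination ℝ (f (n + 1)) ν = f n x :=
  let ⟨⟨_, h₁, hc₁⟩, ⟨_, h₂, hc₂⟩⟩ := hf n x
  exists_isProbOn_linearCombination_eq h₁ h₂ hc₁ hc₂

section SetFunction

variable {Ω : Type*} {f : ℕ → Ω → ℝ} {μ : ℕ → Ω →₀ ℝ}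

open Classical in
variable (f μ) in
/-- Independent of the level chosen by `Nat.find` as soon as the masses of the `μ n` are
consistent, see `algInfMass_eq`. -/
noncomputable def algInfMass (A : Set Ω) : ℝ :=
  if h : ∃ n, A ∈ algLevel f n then setMass (μ (Nat.find h)) A else 0

lemma setMass_eq_of_le
    (hμ : ∀ n, ∀ A ∈ algLevel f n, setMass (μ (n + 1)) A = setMass (μ n) A)
    {m n : ℕ} (hmn : m ≤ n) {A : Set Ω} (hA : A ∈ algLevel f m) :
    setMass (μ n) A = setMass (μ m) A := by
  induction n, hmn using Nat.le_induction with
  | base => rfl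
  | succ n hmn ih => rw [hμ n A (algLevel_mono hmn hA), ih]

lemma algInfMass_eq
    (hμ : ∀ n, ∀ A ∈ algLevel f n, setMass (μ (n + 1)) A = setMass (μ n) A)
    {n : ℕ} {A : Set Ω} (hA : A ∈ algLevel f n) : algInfMass f μ A = setMass (μ n) A := by
  classical
  have h : ∃ n, A ∈ algLevel f n := ⟨n, hA⟩
  rw [algInfMass, dif_pos h, setMass_eq_of_le hμ (Nat.find_min' h hA) (Nat.find_spec h)]

lemma isFAProb_algInfMass (hprob : ∀ n, IsProbOn (μ n) Set.univ)
    (hμ : ∀ n, ∀ A ∈ algLevel f n, setMass (μ (n + 1)) A = setMass (μ n) A) :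
    IsFAProb (algInf f) (algInfMass f μ) := by
  have hlevel : ∀ A ∈ algInf f, ∃ n, A ∈ algLevel f n := fun A => Set.mem_iUnion.mp
  refine ⟨fun A hA => ?_, ?_, ?_, fun A hA B hB hAB => ?_⟩
  · obtain ⟨n, hn⟩ := hlevel A hA
    rw [algInfMass_eq hμ hn]
    exact linearCombination_nonneg (hprob n).nonneg (Set.indicator_nonneg fun _ _ => zero_le_one)
  · rw [algInfMass_eq hμ (n := 0) fun _ h => h.elim]
    simp [setMass, linearCombination_apply]
  · rw [algInfMass_eq hμ (n := 0) fun _ _ => Set.subset_univ _, setMass, Set.indicator_univ]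
    exact (hprob 0).total
  · obtain ⟨n₁, hA⟩ := hlevel A hA
    obtain ⟨n₂, hB⟩ := hlevel B hB
    replace hA := algLevel_mono (le_max_left n₁ n₂) hA
    replace hB := algLevel_mono (le_max_right n₁ n₂) hB
    rw [algInfMass_eq hμ (union_mem_algLevel hA hB), algInfMass_eq hμ hA, algInfMass_eq hμ hB,
      setMass_union hAB]

end SetFunction

section ChainOnAtoms

variable {Ω : Type*} {f : ℕ → Ω → ℝ} {κ : ℕ → Ω → Ω →₀ ℝ} {x₀ : Ω}

lemma setMass_chainLaw_succ (hκ : ∀ n x, IsProbOn (κ n x) (atomOf f n x)) {n : ℕ} {A : Set Ω}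
    (hA : A ∈ algLevel f n) : setMass (chainLaw x₀ κ (n + 1)) A = setMass (chainLaw x₀ κ n) A := by
  rw [setMass, chainLaw_succ_linearCombination]
  congr 2
  funext x
  exact (hκ n x).linearCombination_eq_of_eqOn fun y hy =>
    Set.indicator_eq_indicator (mem_iff_of_mem_atomOf hA hy) rfl

lemma linearCombination_indicator_atomOf_chainLaw_succ
    (hκ : ∀ n x, IsProbOn (κ n x) (atomOf f n x))
    (hmean : ∀ n x, linearCombination ℝ (f (n + 1)) (κ n x) = f n x) (n : ℕ) (ω : Ω) :
    linearCombination ℝ ((atomOf f n ω).indicator (f (n + 1))) (chainLaw x₀ κ (n + 1)) =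
      f n ω * setMass (chainLaw x₀ κ n) (atomOf f n ω) := by
  rw [chainLaw_succ_linearCombination, setMass, ← linearCombination_const_mul]
  congr 2
  funext x
  by_cases hx : x ∈ atomOf f n ω
  · rw [linearCombination_congr_of_support_subset (hκ n x).support_subset (h := f (n + 1))
      fun y hy => Set.indicator_of_mem (atomOf_subset_of_mem hx hy) _, hmean, hx n le_rfl,
      Set.indicator_of_mem hx, Pi.one_apply, mul_one]
  · have hQ : Set.EqOn ((atomOf f n ω).indicator (f (n + 1))) (fun _ => 0) (atomOf f n x) :=
      fun y hy => Set.indicator_of_notMem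
        (fun hyQ => hx ((mem_iff_of_mem_atomOf (atomOf_mem_algLevel f n ω) hy).1 hyQ)) _
    rw [(hκ n x).linearCombination_eq_of_eqOn hQ, Set.indicator_of_notMem hx, mul_zero]

end ChainOnAtoms

/-- A measure free martingale admits a finitely additive probability measure `P`
on `𝒜_∞` under which it is a martingale. -/
theorem measure_free_martingale_has_martingale_measure {Ω : Type*} [Nonempty Ω]
    (f : ℕ → Ω → ℝ) (hfin : ∀ n, (Set.range (f n)).Finite)
    (hmfm : IsMeasureFreeMartingale f) :
    ∃ P : Set Ω → ℝ, IsFAProb (algInf f) P ∧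
      ∀ n (ω : Ω), 0 < P (atomOf f n ω) →
        ∑ v ∈ (hfin (n + 1)).toFinset,
        v * P (atomOf f n ω ∩ f (n + 1) ⁻¹' {v}) = f n ω * P (atomOf f n ω) := by
  choose κ hκ hmean using hmfm.exists_isProbOn
  set μ := chainLaw (Classical.arbitrary Ω) κ
  have hstable : ∀ n, ∀ A ∈ algLevel f n, setMass (μ (n + 1)) A = setMass (μ n) A :=
    fun _ _ => setMass_chainLaw_succ hκ
  refine ⟨algInfMass f μ, isFAProb_algInfMass (isProbOn_chainLaw hκ) hstable, fun n ω _ => ?_⟩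
  calc ∑ v ∈ (hfin (n + 1)).toFinset, v * algInfMass f μ (atomOf f n ω ∩ f (n + 1) ⁻¹' {v})
      = ∑ v ∈ (hfin (n + 1)).toFinset,
          v * setMass (μ (n + 1)) (atomOf f n ω ∩ f (n + 1) ⁻¹' {v}) :=
        Finset.sum_congr rfl fun v _ => by
          rw [algInfMass_eq hstable (atomOf_inter_preimage_mem_algLevel_succ ω v)]
    _ = linearCombination ℝ ((atomOf f n ω).indicator (f (n + 1))) (μ (n + 1)) :=
        sum_mul_setMass_inter_preimage (fun x => (hfin (n + 1)).mem_toFinset.mpr ⟨x, rfl⟩) _ _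
    _ = f n ω * algInfMass f μ (atomOf f n ω) := by
        rw [linearCombination_indicator_atomOf_chainLaw_succ hκ hmean,
          algInfMass_eq hstable (atomOf_mem_algLevel f n ω)]
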